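/- For every n ≥ 0, the number of Motzkin paths of length n with an even number of U steps equals Σ_{k≥0} C(n, 4k)·Cat(2k), where Cat denotes Catalan numbers. -/

import Mathlib

inductive MStep where
  | U : MStep
  | D : MStep
  | H : MStep
deriving DecidableEq

/-- A word in {U,D,H} is a Motzkin path if #U = #D and no prefix has more D's than U's. -/
def IsMotzkin (w : List MStep) : Prop :=
  w.count MStep.U = w.count MStep.D ∧
  ∀ p : List MStep, p <+: w → p.count MStep.D ≤ p.count MStep.U

/-- Number of Motzkin paths of length n (the n-th Motzkin number). -/
noncomputable def motzkinNum (n : ℕ) : ℕ :=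
  Nat.card {w : List MStep // w.length = n ∧ IsMotzkin w}

/-- Number of Motzkin paths of length n with an even number of U steps. -/
noncomputable def evenMotzkin (n : ℕ) : ℕ :=
  Nat.card {w : List MStep // w.length = n ∧ IsMotzkin w ∧ Even (w.count MStep.U)}

/-- Number of Motzkin paths of length n with an odd number of U steps. -/
noncomputable def oddMotzkin (n : ℕ) : ℕ :=
  Nat.card {w : List MStep // w.length = n ∧ IsMotzkin w ∧ Odd (w.count MStep.U)}

/-- The shadow of the n-th Motzkin number: s(n) = a(n) - b(n). -/
noncomputable def shadow (n : ℕ) : ℤ :=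
  (evenMotzkin n : ℤ) - (oddMotzkin n : ℤ)

/-! A Motzkin path is determined by its mask (which positions carry an up or down step) and by
the Dyck word left after deleting its level steps. For a path of length `n` with `m` up steps the
mask is any `2m`-subset of the `n` positions and the Dyck word any one of semilength `m`, giving
`C(n, 2m) · Cat(m)` paths; summing over `m = 2k` gives the formula. -/

open List

lemma List.forall_prefix_filterMap_iff {α β : Type*} (f : α → Option β) (l : List α)
    (P : List β → Prop) :
    (∀ p, p <+: l → P (p.filterMap f)) ↔ ∀ q, q <+: l.filterMap f → P q := by
  refine ⟨fun h q ⟨t, hqt⟩ => ?_, fun h p hp => h _ (hp.filterMap f)⟩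
  obtain ⟨l₁, l₂, rfl, rfl, -⟩ := filterMap_eq_append_iff.mp hqt.symm
  exact h l₁ (prefix_append l₁ l₂)

lemma List.forall_prefix_iff_forall_take {α : Type*} (l : List α) (P : List α → Prop) :
    (∀ q, q <+: l → P q) ↔ ∀ i, P (l.take i) :=
  ⟨fun h i => h _ (take_prefix i l), fun h q hq => by rw [prefix_iff_eq_take.mp hq]; exact h _⟩

lemma card_vector_bool_count_true (n k : ℕ) :
    Nat.card {b : List.Vector Bool n // b.toList.count true = k} = n.choose k := by
  let e : {b : List.Vector Bool n // b.toList.count true = k} ≃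
      {s : Finset (Fin n) // s.card = k} :=
    { toFun := fun b => ⟨Finset.univ.filter (b.1.get · = true), by
        rw [Fin.card_filter_univ_eq_vector_get_eq_count]; exact b.2⟩
      invFun := fun s => ⟨List.Vector.ofFn (· ∈ s.1), by
        rw [← Fin.card_filter_univ_eq_vector_get_eq_count]; simpa using s.2⟩
      left_inv := fun b => Subtype.ext (List.Vector.ext fun i => by simp)
      right_inv := fun s => Subtype.ext (by ext; simp) }
  rw [Nat.card_congr e, Nat.card_eq_fintype_card, Fintype.card_finset_len, Fintype.card_fin]

lemma Nat.card_eq_sum_range_card_fiber {α : Type*} [Finite α] (f : α → ℕ) {N : ℕ}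
    (hf : ∀ a, f a < N) : Nat.card α = ∑ k ∈ Finset.range N, Nat.card {a // f a = k} := by
  let g : α → Fin N := fun a => ⟨f a, hf a⟩
  rw [← Nat.card_congr (Equiv.sigmaFiberEquiv g), Nat.card_sigma, ← Fin.sum_univ_eq_sum_range]
  exact Finset.sum_congr rfl fun k _ => Nat.card_congr (Equiv.subtypeEquivRight fun a => Fin.ext_iff)

namespace MStep

instance : Fintype MStep := ⟨{U, D, H}, fun x => by cases x <;> simp⟩

def toDyckStep : MStep → Option DyckStep
  | U => some .U
  | D => some .D
  | H => none

def ofDyckStep : DyckStep → MStep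
  | .U => U
  | .D => D

lemma toDyckStep_eq_some_iff {x : MStep} {s : DyckStep} :
    x.toDyckStep = some s ↔ x = ofDyckStep s := by
  cases x <;> cases s <;> simp [toDyckStep, ofDyckStep]

end MStep

open MStep

def dyckPart (w : List MStep) : List DyckStep := w.filterMap toDyckStep

def stepMask (w : List MStep) : List Bool := w.map fun x => x.toDyckStep.isSome

lemma count_dyckPart (w : List MStep) (s : DyckStep) :
    (dyckPart w).count s = w.count (ofDyckStep s) := by
  rw [dyckPart, count_filterMap, count_eq_countP]
  congr 1
  ext x
  simp [toDyckStep_eq_some_iff]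

lemma count_true_stepMask (w : List MStep) : (stepMask w).count true = (dyckPart w).length := by
  induction w with
  | nil => rfl
  | cons x w ih => cases x <;> simp_all [stepMask, dyckPart, toDyckStep, filterMap_cons]

lemma isMotzkin_iff_dyckPart (w : List MStep) :
    IsMotzkin w ↔ (dyckPart w).count .U = (dyckPart w).count .D ∧
      ∀ i, ((dyckPart w).take i).count .D ≤ ((dyckPart w).take i).count .U := by
  refine and_congr (by rw [count_dyckPart, count_dyckPart]; rfl) ?_
  rw [← forall_prefix_iff_forall_take _ fun q => q.count DyckStep.D ≤ q.count DyckStep.U, dyckPart,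
    ← forall_prefix_filterMap_iff]
  exact forall₂_congr fun p _ => by rw [← dyckPart, count_dyckPart, count_dyckPart]; rfl

def IsMotzkin.toDyckWord {w : List MStep} (hw : IsMotzkin w) : DyckWord :=
  ⟨dyckPart w, ((isMotzkin_iff_dyckPart w).mp hw).1, ((isMotzkin_iff_dyckPart w).mp hw).2⟩

lemma IsMotzkin.semilength_toDyckWord {w : List MStep} (hw : IsMotzkin w) :
    hw.toDyckWord.semilength = w.count U :=
  count_dyckPart w .U

def fillMask : List Bool → List DyckStep → List MStep
  | [], _ => []
  | false :: b, d => H :: fillMask b d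
  | true :: b, [] => H :: fillMask b [] -- junk: more `true`s in the mask than Dyck steps
  | true :: b, s :: d => ofDyckStep s :: fillMask b d

lemma length_fillMask : ∀ (b : List Bool) (d : List DyckStep), (fillMask b d).length = b.length
  | [], _ => rfl
  | false :: b, d => by simp [fillMask, length_fillMask b d]
  | true :: b, [] => by simp [fillMask, length_fillMask b []]
  | true :: b, _ :: d => by simp [fillMask, length_fillMask b d]

lemma fillMask_stepMask_dyckPart : ∀ w : List MStep, fillMask (stepMask w) (dyckPart w) = w
  | [] => rfl
  | x :: w => by
    cases x <;> simpa [stepMask, dyckPart, toDyckStep, ofDyckStep, fillMask, filterMap_cons] using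
      fillMask_stepMask_dyckPart w

lemma stepMask_fillMask : ∀ {b : List Bool} {d : List DyckStep}, b.count true = d.length →
    stepMask (fillMask b d) = b
  | [], [], _ => rfl
  | false :: b, d, h => by
    simpa [stepMask, fillMask, toDyckStep] using
      stepMask_fillMask (b := b) (d := d) (by simpa using h)
  | true :: b, s :: d, h => by
    cases s <;> simpa [stepMask, fillMask, toDyckStep, ofDyckStep] using
      stepMask_fillMask (b := b) (d := d) (by simpa using h)
  | [], _ :: _, h | true :: _, [], h => by simp at h

lemma dyckPart_fillMask : ∀ {b : List Bool} {d : List DyckStep}, b.count true = d.length →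
    dyckPart (fillMask b d) = d
  | [], [], _ => rfl
  | false :: b, d, h => by
    simpa [dyckPart, fillMask, toDyckStep, filterMap_cons] using
      dyckPart_fillMask (b := b) (d := d) (by simpa using h)
  | true :: b, s :: d, h => by
    cases s <;> simpa [dyckPart, fillMask, toDyckStep, ofDyckStep] using
      dyckPart_fillMask (b := b) (d := d) (by simpa using h)
  | [], _ :: _, h | true :: _, [], h => by simp at h

lemma IsMotzkin.length_dyckPart {w : List MStep} (hw : IsMotzkin w) :
    (dyckPart w).length = 2 * w.count U := by
  rw [← hw.semilength_toDyckWord, DyckWord.two_mul_semilength_eq_length]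
  rfl

lemma isMotzkin_fillMask {b : List Bool} (p : DyckWord) (h : b.count true = p.toList.length) :
    IsMotzkin (fillMask b p.toList) :=
  (isMotzkin_iff_dyckPart _).mpr
    ((dyckPart_fillMask h).symm ▸ ⟨p.count_U_eq_count_D, p.count_D_le_count_U⟩)

lemma count_U_fillMask {b : List Bool} (p : DyckWord) (h : b.count true = p.toList.length) :
    (fillMask b p.toList).count U = p.semilength := by
  have := count_dyckPart (fillMask b p.toList) .U
  rw [dyckPart_fillMask h] at this
  exact this.symm

lemma count_true_eq_length_of_semilength {b : List Bool} {p : DyckWord} {m : ℕ}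
    (hb : b.count true = 2 * m) (hp : p.semilength = m) : b.count true = p.toList.length := by
  rw [hb, ← hp, p.two_mul_semilength_eq_length]

def motzkinEquiv (n m : ℕ) :
    {w : List MStep // w.length = n ∧ IsMotzkin w ∧ w.count U = m} ≃
      {b : List.Vector Bool n // b.toList.count true = 2 * m} × {p : DyckWord // p.semilength = m}
    where
  toFun := fun ⟨w, hn, hw, hU⟩ =>
    (⟨⟨stepMask w, by simp [stepMask, hn]⟩, by
        simp [count_true_stepMask, hw.length_dyckPart, hU]⟩,
      ⟨hw.toDyckWord, hw.semilength_toDyckWord.trans hU⟩)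
  invFun := fun ⟨⟨b, hb⟩, ⟨p, hp⟩⟩ =>
    have h := count_true_eq_length_of_semilength hb hp
    ⟨fillMask b.toList p.toList, by simp [length_fillMask], isMotzkin_fillMask p h,
      (count_U_fillMask p h).trans hp⟩
  left_inv := fun ⟨w, _, _, _⟩ => Subtype.ext (fillMask_stepMask_dyckPart w)
  right_inv := fun ⟨⟨b, hb⟩, ⟨p, hp⟩⟩ =>
    have h := count_true_eq_length_of_semilength hb hp
    Prod.ext (Subtype.ext (List.Vector.toList_injective (stepMask_fillMask h)))
      (Subtype.ext (DyckWord.ext (dyckPart_fillMask h)))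

theorem card_motzkin_count_U_eq (n m : ℕ) :
    Nat.card {w : List MStep // w.length = n ∧ IsMotzkin w ∧ w.count U = m} =
      n.choose (2 * m) * catalan m := by
  rw [Nat.card_congr (motzkinEquiv n m), Nat.card_prod, card_vector_bool_count_true,
    Nat.card_eq_fintype_card (α := {p : DyckWord // p.semilength = m}),
    DyckWord.card_dyckWord_semilength_eq_catalan]

theorem stmt_4 : ∀ n : ℕ,
    evenMotzkin n = ∑ k ∈ Finset.range (n + 1), Nat.choose n (4 * k) * catalan (2 * k) := by
  intro n
  have : Finite {w : List MStep // w.length = n ∧ IsMotzkin w ∧ Even (w.count U)} :=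
    ((List.finite_length_eq MStep n).subset fun _ hw => hw.1).to_subtype
  rw [evenMotzkin, Nat.card_eq_sum_range_card_fiber (fun w => w.1.count U / 2)
    fun w => Nat.lt_succ_of_le ((Nat.div_le_self _ _).trans (w.2.1 ▸ count_le_length))]
  refine Finset.sum_congr rfl fun k _ => ?_
  rw [show 4 * k = 2 * (2 * k) by ring, ← card_motzkin_count_U_eq]
  refine Nat.card_congr ((Equiv.subtypeSubtypeEquivSubtypeInter
    (fun w => w.length = n ∧ IsMotzkin w ∧ Even (w.count U)) (fun w => w.count U / 2 = k)).trans
    (Equiv.subtypeEquivRight fun w => ?_))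
  simp only [and_assoc, Nat.even_iff]
  exact and_congr_right fun _ => and_congr_right fun _ => by omega
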